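/- Every symplectic self-duality of a finite abelian group is standard: if L is a finite abelian group and ∇ : L → Hom(L, ℚ/ℤ) is an isomorphism with ∇(x)(x)=0 for all x, then there exists a finite abelian group A and an isomorphism φ : A × dual(A) → L with ∇(φ(x,χ))(φ(y,λ)) = χ(y) − λ(x). -/

import Mathlib

/-- ℚ/ℤ, the dualizing object for finite abelian groups. -/
abbrev QZ : Type := AddCircle (1 : ℚ)

/-- `(L, ∇)` is isomorphic, as a group with symplectic self-duality, to
`A × dual A` with the standard symplectic self-duality
`∇⁰(x,χ)(y,λ) = χ(y) − λ(x)`. -/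
def StandardPair (A L : Type) [AddCommGroup A] [AddCommGroup L]
    (nabla : L ≃+ (L →+ QZ)) : Prop :=
  ∃ φ : (A × (A →+ QZ)) ≃+ L,
    ∀ a b : A × (A →+ QZ), nabla (φ a) (φ b) = a.2 b.1 - b.2 a.1

/-!
View `∇` as the alternating biadditive pairing `(x, y) ↦ ∇ x y`. If `x` has maximal order `e`,
then `∇ x` has order `e`, so `∇ x y` has order `e` for some `y`. The `e`-torsion of `ℚ/ℤ` is
cyclic, so every character takes its values at `x` and `y` among the multiples of `∇ x y`; hence
`∇` is nondegenerate on the hyperbolic plane `⟨x, y⟩`, and `L = ⟨x, y⟩ ⊕ ⟨x, y⟩^⊥` with `∇`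
nondegenerate on the second summand. Induction yields isotropic subgroups `A`, `B` with
`A + B = L`; then `b ↦ ∇ b |_A` identifies `B` with `dual A`, and `(a, χ)` is sent to `a` plus the
element of `B` corresponding to `χ`.
-/

open AddSubgroup

theorem QZ.mem_zmultiples_of_nsmul_eq_zero {n : ℕ} (hn : 0 < n) {q r : QZ}
    (hq : addOrderOf q = n) (hr : n • r = 0) : r ∈ zmultiples q := by
  set g : QZ := ((1 / n : ℚ) : QZ)
  have torsion_le : ∀ s : QZ, n • s = 0 → s ∈ zmultiples g := by
    intro s hs
    induction s using QuotientAddGroup.induction_on with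
    | H t =>
      rw [← AddCircle.coe_nsmul, AddCircle.coe_eq_zero_iff] at hs
      obtain ⟨k, hk⟩ := hs
      refine ⟨k, ?_⟩
      change k • g = _
      rw [← AddCircle.coe_zsmul]
      congr 1
      simp only [zsmul_eq_mul, nsmul_eq_mul, mul_one] at hk ⊢
      field_simp
      linarith
  have hg : addOrderOf g = n := AddCircle.addOrderOf_period_div hn
  have : Finite (zmultiples g) := Nat.finite_of_card_ne_zero (by simp [hg, hn.ne'])
  have hqg : zmultiples q = zmultiples g :=
    eq_of_le_of_card_ge (zmultiples_le.2 (torsion_le q (hq ▸ addOrderOf_nsmul_eq_zero q)))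
      (by rw [Nat.card_zmultiples, Nat.card_zmultiples, hq, hg])
  exact hqg ▸ torsion_le r hr

theorem AddMonoidHom.exists_addOrderOf_apply_eq {G Q : Type*} [AddCommGroup G] [Finite G]
    [AddCommGroup Q] (f : G →+ Q) : ∃ g, addOrderOf (f g) = addOrderOf f := by
  have : Finite f.range := Finite.of_surjective _ f.rangeRestrict_surjective
  obtain ⟨⟨_, g, rfl⟩, hg⟩ :=
    AddMonoid.exists_addOrderOf_eq_exponent (AddMonoid.ExponentExists.of_finite (G := f.range))
  refine ⟨g, ?_⟩
  rw [← addOrderOf_coe] at hg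
  rw [hg]
  refine Nat.dvd_antisymm (AddMonoid.exponent_dvd_of_forall_nsmul_eq_zero ?_)
    (addOrderOf_dvd_of_nsmul_eq_zero ?_)
  · rintro ⟨_, g', rfl⟩
    ext
    simp [← AddMonoidHom.nsmul_apply, addOrderOf_nsmul_eq_zero]
  · ext g'
    have := AddMonoid.exponent_nsmul_eq_zero (⟨f g', g', rfl⟩ : f.range)
    simpa using congrArg Subtype.val this

namespace AddMonoidHom

variable {L Q : Type*} [AddCommGroup L] [AddCommGroup Q] (β : L →+ L →+ Q)

def orthogonal (S : AddSubgroup L) : AddSubgroup L where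
  carrier := {z | ∀ s ∈ S, β z s = 0}
  zero_mem' := by simp
  add_mem' ha hb s hs := by simp [ha s hs, hb s hs]
  neg_mem' ha s hs := by simp [ha s hs]

theorem orthogonal_antitone : Antitone β.orthogonal :=
  fun _ _ hST _ hz s hs => hz s (hST hs)

theorem orthogonal_sup (S T : AddSubgroup L) :
    β.orthogonal (S ⊔ T) = β.orthogonal S ⊓ β.orthogonal T := by
  refine le_antisymm (le_inf (β.orthogonal_antitone le_sup_left)
    (β.orthogonal_antitone le_sup_right)) fun z hz w hw => ?_
  obtain ⟨s, hs, t, ht, rfl⟩ := mem_sup.1 hw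
  rw [map_add, hz.1 s hs, hz.2 t ht, add_zero]

def IsIsotropic (S : AddSubgroup L) : Prop :=
  S ≤ β.orthogonal S

/-- Surjectivity of `M → Hom(M, Q)` is stated for characters of the ambient group `L`; for
`Q = ℚ/ℤ` this is equivalent, since every character of `M` extends to `L`. -/
structure IsNondegenerateOn (M : AddSubgroup L) : Prop where
  eq_zero : ∀ m ∈ M, (∀ m' ∈ M, β m m' = 0) → m = 0
  exists_eq : ∀ χ : L →+ Q, ∃ m ∈ M, ∀ m' ∈ M, β m m' = χ m'

theorem sup_inf_orthogonal_eq {H M : AddSubgroup L} (hH : β.IsNondegenerateOn H) (hHM : H ≤ M) :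
    H ⊔ M ⊓ β.orthogonal H = M := by
  refine le_antisymm (sup_le hHM inf_le_left) fun m hm => ?_
  obtain ⟨h, hh, hhm⟩ := hH.exists_eq (β m)
  refine mem_sup.2 ⟨h, hh, m - h, mem_inf.2 ⟨sub_mem hm (hHM hh), fun s hs => ?_⟩,
    add_sub_cancel _ _⟩
  simp [hhm s hs]

section Alternating

variable {β} (hβ : ∀ x, β x x = 0)
include hβ

theorem apply_swap (x y : L) : β y x = -β x y := by
  have h := hβ (x + y)
  simp only [map_add, add_apply, hβ, zero_add, add_zero] at h
  exact eq_neg_of_add_eq_zero_left h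

theorem le_orthogonal_comm {S T : AddSubgroup L} : S ≤ β.orthogonal T ↔ T ≤ β.orthogonal S :=
  ⟨fun h t ht s hs => by rw [apply_swap hβ, h hs t ht, neg_zero],
    fun h s hs t ht => by rw [apply_swap hβ, h ht s hs, neg_zero]⟩

theorem isIsotropic_zmultiples (x : L) : β.IsIsotropic (zmultiples x) := by
  rintro _ ⟨a, rfl⟩ _ ⟨b, rfl⟩
  simp [hβ]

theorem IsIsotropic.sup {S T : AddSubgroup L} (hS : β.IsIsotropic S) (hT : β.IsIsotropic T)
    (hST : T ≤ β.orthogonal S) : β.IsIsotropic (S ⊔ T) := by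
  rw [IsIsotropic, orthogonal_sup]
  exact sup_le (le_inf hS ((le_orthogonal_comm hβ).1 hST)) (le_inf hST hT)

theorem IsNondegenerateOn.inf_orthogonal {H M : AddSubgroup L} (hM : β.IsNondegenerateOn M)
    (hH : β.IsNondegenerateOn H) (hHM : H ≤ M) : β.IsNondegenerateOn (M ⊓ β.orthogonal H) where
  eq_zero k hk hzero := by
    refine hM.eq_zero k hk.1 fun m hm => ?_
    rw [← β.sup_inf_orthogonal_eq hH hHM] at hm
    obtain ⟨h, hh, k', hk', rfl⟩ := mem_sup.1 hm
    rw [map_add, hk.2 h hh, hzero k' hk', add_zero]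
  exists_eq χ := by
    obtain ⟨m, hm, hmχ⟩ := hM.exists_eq χ
    rw [← β.sup_inf_orthogonal_eq hH hHM] at hm
    obtain ⟨h, hh, k, hk, rfl⟩ := mem_sup.1 hm
    refine ⟨k, hk, fun k' hk' => ?_⟩
    have hhk' : β h k' = 0 := by rw [apply_swap hβ, hk'.2 h hh, neg_zero]
    rw [← hmχ k' hk'.1, map_add, add_apply, hhk', zero_add]

end Alternating

end AddMonoidHom

section Hyperbolic

open AddMonoidHom

variable {L : Type*} [AddCommGroup L] {β : L →+ L →+ QZ} (hβ : ∀ x, β x x = 0)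
include hβ

theorem isNondegenerateOn_zmultiples_sup_zmultiples {x y : L} {e : ℕ} (he : 0 < e)
    (hx : e • x = 0) (hy : e • y = 0) (hxy : addOrderOf (β x y) = e) :
    β.IsNondegenerateOn (zmultiples x ⊔ zmultiples y) where
  eq_zero := by
    rintro _ hh hzero
    obtain ⟨_, ⟨a, rfl⟩, _, ⟨b, rfl⟩, rfl⟩ := mem_sup.1 hh
    have hb : b • β x y = 0 := by
      simpa [hβ, apply_swap hβ x y] using hzero x (mem_sup_left (mem_zmultiples x))
    have ha : a • β x y = 0 := by
      simpa [hβ] using hzero y (mem_sup_right (mem_zmultiples y))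
    have hxe := Int.natCast_dvd_natCast.2 (addOrderOf_dvd_of_nsmul_eq_zero hx)
    have hye := Int.natCast_dvd_natCast.2 (addOrderOf_dvd_of_nsmul_eq_zero hy)
    rw [← addOrderOf_dvd_iff_zsmul_eq_zero, hxy] at ha hb
    change a • x + b • y = 0
    rw [addOrderOf_dvd_iff_zsmul_eq_zero.1 (hxe.trans ha),
      addOrderOf_dvd_iff_zsmul_eq_zero.1 (hye.trans hb), add_zero]
  exists_eq χ := by
    have torsion (z : L) (hz : e • z = 0) : ∃ k : ℤ, k • β x y = χ z :=
      mem_zmultiples_iff.1 (QZ.mem_zmultiples_of_nsmul_eq_zero he hxy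
        (by rw [← map_nsmul, hz, map_zero]))
    obtain ⟨m, hm⟩ := torsion x hx
    obtain ⟨n, hn⟩ := torsion y hy
    refine ⟨n • x - m • y, sub_mem (zsmul_mem (mem_sup_left (mem_zmultiples x)) n)
      (zsmul_mem (mem_sup_right (mem_zmultiples y)) m), fun h hh => ?_⟩
    suffices zmultiples x ⊔ zmultiples y ≤ (β (n • x - m • y) - χ).ker by
      simpa [sub_eq_zero] using this hh
    refine sup_le (zmultiples_le.2 ?_) (zmultiples_le.2 ?_) <;>
      simp [hβ, apply_swap hβ x y, hm, hn]

theorem exists_hyperbolic_pair [Finite L] {M : AddSubgroup L} (hM : β.IsNondegenerateOn M)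
    (hne : M ≠ ⊥) : ∃ x ∈ M, ∃ y ∈ M, β x y ≠ 0 ∧
      β.IsNondegenerateOn (zmultiples x ⊔ zmultiples y) := by
  have hexp : AddMonoid.ExponentExists M := .of_finite
  obtain ⟨x, hx⟩ := AddMonoid.exists_addOrderOf_eq_exponent hexp
  set e := AddMonoid.exponent M
  have hkill (m : M) : e • (m : L) = 0 := by
    rw [← coe_nsmul, AddMonoid.exponent_nsmul_eq_zero, coe_zero]
  set f : M →+ QZ := (β x).comp M.subtype
  have hf : addOrderOf f = e := by
    refine Nat.dvd_antisymm (addOrderOf_dvd_of_nsmul_eq_zero ?_) ?_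
    · ext m
      change e • β x m = 0
      rw [← nsmul_apply, ← map_nsmul, hkill x, map_zero, AddMonoidHom.zero_apply]
    · rw [← hx, ← addOrderOf_coe]
      refine addOrderOf_dvd_of_nsmul_eq_zero (hM.eq_zero _ (nsmul_mem x.2 _) fun m hm => ?_)
      rw [map_nsmul, nsmul_apply]
      exact DFunLike.congr_fun (addOrderOf_nsmul_eq_zero f) ⟨m, hm⟩
  obtain ⟨y, hy⟩ := f.exists_addOrderOf_apply_eq
  have hxy : addOrderOf (β x y) = e := hy.trans hf
  refine ⟨x, x.2, y, y.2, fun h0 => hne ?_, isNondegenerateOn_zmultiples_sup_zmultiples hβ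
    hexp.exponent_pos (hkill x) (hkill y) hxy⟩
  rw [h0, addOrderOf_zero, eq_comm, AddMonoid.exp_eq_one_iff] at hxy
  exact eq_bot_of_subsingleton M

theorem exists_isIsotropic_sup_eq [Finite L] (M : AddSubgroup L) (hM : β.IsNondegenerateOn M) :
    ∃ A B, β.IsIsotropic A ∧ β.IsIsotropic B ∧ A ⊔ B = M := by
  induction M using WellFoundedLT.induction with
  | _ M ih =>
    rcases eq_or_ne M ⊥ with rfl | hne
    · exact ⟨⊥, ⊥, bot_le, bot_le, bot_sup_eq _⟩
    obtain ⟨x, hx, y, hy, hxy, hH⟩ := exists_hyperbolic_pair hβ hM hne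
    have hHM : zmultiples x ⊔ zmultiples y ≤ M := sup_le (zmultiples_le.2 hx) (zmultiples_le.2 hy)
    set K := M ⊓ β.orthogonal (zmultiples x ⊔ zmultiples y)
    have hKM : K < M := lt_of_le_of_ne inf_le_left fun h =>
      hxy ((mem_inf.1 (h ▸ hx : x ∈ K)).2 y (mem_sup_right (mem_zmultiples y)))
    obtain ⟨A, B, hA, hB, hAB⟩ := ih K hKM (hM.inf_orthogonal hβ hH hHM)
    have hK : K ≤ β.orthogonal (zmultiples x) ⊓ β.orthogonal (zmultiples y) :=
      β.orthogonal_sup _ _ ▸ inf_le_right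
    have hAK : A ≤ K := hAB ▸ le_sup_left
    have hBK : B ≤ K := hAB ▸ le_sup_right
    refine ⟨zmultiples x ⊔ A, zmultiples y ⊔ B,
      (isIsotropic_zmultiples hβ x).sup hβ hA (hAK.trans (hK.trans inf_le_left)),
      (isIsotropic_zmultiples hβ y).sup hβ hB (hBK.trans (hK.trans inf_le_right)), ?_⟩
    rw [sup_sup_sup_comm, hAB, β.sup_inf_orthogonal_eq hH hHM]

end Hyperbolic

section Standard

variable {L : Type} [AddCommGroup L] (nabla : L ≃+ (L →+ QZ))

theorem isNondegenerateOn_top : (nabla : L →+ L →+ QZ).IsNondegenerateOn ⊤ where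
  eq_zero m _ hm := nabla.injective (by ext z; simpa using hm z trivial)
  exists_eq χ := ⟨nabla.symm χ, trivial, fun m' _ => by simp⟩

variable {nabla} {A B : AddSubgroup L} (hA : (nabla : L →+ L →+ QZ).IsIsotropic A)
  (hB : (nabla : L →+ L →+ QZ).IsIsotropic B) (hAB : A ⊔ B = ⊤)
include hA hB hAB

noncomputable def dualOfIsotropicComplement : B ≃+ (A →+ QZ) :=
  AddEquiv.ofBijective (A.subtype.compHom'.comp ((nabla : L →+ L →+ QZ).comp B.subtype)) <| by
    refine ⟨(injective_iff_map_eq_zero _).2 fun b hb => Subtype.ext (nabla.injective ?_), ?_⟩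
    · ext z
      obtain ⟨a, ha, b', hb', rfl⟩ := mem_sup.1 (hAB ▸ mem_top z : z ∈ A ⊔ B)
      have hba : nabla b a = 0 := DFunLike.congr_fun hb ⟨a, ha⟩
      have hbb' : nabla b b' = 0 := hB b.2 b' hb'
      simp [hba, hbb']
    · intro χ
      obtain ⟨F, hF⟩ := (Module.Baer.of_divisible QZ).extension_property_addMonoidHom _
        A.subtype_injective χ
      obtain ⟨a, ha, b, hb, hab⟩ := mem_sup.1 (hAB ▸ mem_top (nabla.symm F) : _ ∈ A ⊔ B)
      refine ⟨⟨b, hb⟩, ?_⟩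
      ext a'
      have haa' : nabla a a' = 0 := hA ha a' a'.2
      have := DFunLike.congr_fun (congrArg nabla hab) (a' : L)
      simp [haa'] at this
      simp [← hF, ← this]

theorem standardPair_of_isIsotropic_sup_eq_top (hsymp : ∀ x, nabla x x = 0) :
    StandardPair A L nabla := by
  set ρ := dualOfIsotropicComplement hA hB hAB
  have hρ (χ : A →+ QZ) (a : A) : nabla (ρ.symm χ) a = χ a :=
    DFunLike.congr_fun (ρ.apply_symm_apply χ) a
  set φ : A × (A →+ QZ) →+ L := A.subtype.coprod (B.subtype.comp ρ.symm.toAddMonoidHom)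
  have hφ (p : A × (A →+ QZ)) : φ p = p.1 + ρ.symm p.2 := rfl
  have hφA (p : A × (A →+ QZ)) (a : A) : nabla (φ p) a = p.2 a := by
    have haa : nabla p.1 a = 0 := hA p.1.2 a a.2
    rw [hφ, map_add, AddMonoidHom.add_apply, haa, hρ, zero_add]
  have hbij : Function.Bijective φ := by
    refine ⟨(injective_iff_map_eq_zero _).2 fun p hp => ?_, fun z => ?_⟩
    · have hχ : p.2 = 0 := by
        ext a
        simp [← hφA, hp]
      rw [hφ, hχ, map_zero, ZeroMemClass.coe_zero, add_zero, ZeroMemClass.coe_eq_zero] at hp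
      exact Prod.ext hp hχ
    · obtain ⟨a, ha, b, hb, rfl⟩ := mem_sup.1 (hAB ▸ mem_top z : z ∈ A ⊔ B)
      exact ⟨(⟨a, ha⟩, ρ ⟨b, hb⟩), by simp [hφ]⟩
  refine ⟨AddEquiv.ofBijective φ hbij, fun p q => ?_⟩
  have hswap (x y : L) : nabla y x = -nabla x y :=
    AddMonoidHom.apply_swap (β := nabla.toAddMonoidHom) hsymp x y
  have hqp : nabla (ρ.symm q.2) (ρ.symm p.2) = 0 := hB (ρ.symm q.2).2 _ (ρ.symm p.2).2
  rw [AddEquiv.ofBijective_apply, AddEquiv.ofBijective_apply, hφ q, map_add, hφA, hswap, hφ p,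
    map_add, hρ, hqp, add_zero, sub_eq_add_neg]

end Standard

/-- Every symplectic self-duality of a finite abelian group is standard. -/
theorem statement10 (L : Type) [AddCommGroup L] [Fintype L]
    (nabla : L ≃+ (L →+ QZ)) (hsymp : ∀ x : L, nabla x x = 0) :
    ∃ (A : Type) (iA : AddCommGroup A) (_ : @Finite A),
      @StandardPair A L iA _ nabla := by
  obtain ⟨A, B, hA, hB, hAB⟩ := exists_isIsotropic_sup_eq hsymp ⊤ (isNondegenerateOn_top nabla)
  exact ⟨A, _, inferInstance, standardPair_of_isIsotropic_sup_eq_top hA hB hAB hsymp⟩
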